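/- Let R_1, ..., R_n be exchangeable real-valued random variables and let Q_{1-α} denote the lower (1-α)-quantile of the empirical distribution (1/n)∑_{j=1}^n δ_{R_j}. If additionally (R_1,...,R_n) is exchangeable with a further variable R_{n+1} jointly (i.e., (R_1,...,R_{n+1}) is exchangeable), then P(R_{n+1} ≤ Q_{1-α} of the empirical distribution of R_1,...,R_{n+1}) ≥ 1 - α. -/

import Mathlib

open MeasureTheory ProbabilityTheory Finset

/-- The `k`-th smallest value (1-indexed, clamped to valid range) of `x`. -/
noncomputable def orderStat {n : ℕ} [NeZero n] (k : ℕ) (x : Fin n → ℝ) : ℝ :=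
  x (Tuple.sort x ⟨min (k - 1) (n - 1), by
    have h := Nat.pos_of_ne_zero (NeZero.ne n); omega⟩)

/-- The lower `β`-quantile of the empirical distribution `(1/n) ∑ δ_{x j}`,
i.e. the `⌈β n⌉`-th smallest of the `x j`. -/
noncomputable def empQuantile {n : ℕ} [NeZero n] (β : ℝ) (x : Fin n → ℝ) : ℝ :=
  orderStat ⌈β * n⌉₊ x

/-!
Let `A i` be the event that the `i`-th value is at most the empirical `(1 - α)`-quantile `Q` of
all `n + 1` values. Since `Q` is a symmetric function of the values, exchangeability makes all
`A i` equally likely, say with probability `p`. Pointwise, at least `⌈(1 - α)(n + 1)⌉` of the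
values lie below `Q`, so `(n + 1) p = 𝔼 #{i | A i} ≥ (1 - α)(n + 1)`.
-/

open scoped ENNReal

section OrderStat

variable {n : ℕ}

lemma card_filter_comp_perm_le (x : Fin n → ℝ) (π : Equiv.Perm (Fin n)) (t : ℝ) :
    #{i | (x ∘ π) i ≤ t} = #{i | x i ≤ t} :=
  card_bij' (fun i _ => π i) (fun i _ => π.symm i) (by simp) (by simp) (by simp) (by simp)

variable [NeZero n]

lemma orderStat_le_iff (k : ℕ) (x : Fin n → ℝ) (t : ℝ) :
    orderStat k x ≤ t ↔ min (k - 1) (n - 1) + 1 ≤ #{i | x i ≤ t} := by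
  rw [orderStat, ← Function.comp_apply (f := x),
    ← Tuple.lt_card_le_iff_apply_le_of_monotone (Tuple.monotone_sort x),
    card_filter_comp_perm_le, Nat.lt_iff_add_one_le]

lemma min_le_card_filter_le_orderStat (k : ℕ) (x : Fin n → ℝ) :
    min k n ≤ #{i | x i ≤ orderStat k x} := by
  have := (orderStat_le_iff k x _).mp le_rfl
  have := NeZero.pos n
  omega

lemma orderStat_comp_perm (k : ℕ) (x : Fin n → ℝ) (π : Equiv.Perm (Fin n)) :
    orderStat k (x ∘ π) = orderStat k x :=
  le_antisymm
    ((orderStat_le_iff k _ _).mpr <| card_filter_comp_perm_le x π _ ▸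
      (orderStat_le_iff k x _).mp le_rfl)
    ((orderStat_le_iff k _ _).mpr <| card_filter_comp_perm_le x π _ ▸
      (orderStat_le_iff k _ _).mp le_rfl)

lemma measurable_orderStat (k : ℕ) : Measurable (orderStat (n := n) k) := by
  refine measurable_of_Iic fun t => ?_
  have hpre : orderStat k ⁻¹' Set.Iic t = ⋃ s ∈ (univ : Finset (Fin n)).powersetCard
      (min (k - 1) (n - 1) + 1), ⋂ i ∈ s, {x | x i ≤ t} := by
    ext x
    simp only [Set.mem_preimage, Set.mem_Iic, orderStat_le_iff, Set.mem_iUnion,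
      Set.mem_iInter, Set.mem_ofPred_eq, mem_powersetCard_univ, exists_prop]
    constructor
    · intro h
      obtain ⟨s, hs, hcard⟩ := exists_subset_card_eq h
      exact ⟨s, hcard, fun i hi => (mem_filter.mp (hs hi)).2⟩
    · rintro ⟨s, hcard, hs⟩
      exact hcard ▸ card_le_card fun i hi => mem_filter.mpr ⟨mem_univ i, hs i hi⟩
  rw [hpre]
  exact .biUnion (countable_toSet _) fun s _ => .biInter (countable_toSet s) fun i _ =>
    measurableSet_le (measurable_pi_apply i) measurable_const

lemma measurable_empQuantile (β : ℝ) : Measurable (empQuantile (n := n) β) :=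
  measurable_orderStat _

lemma mul_le_card_filter_le_empQuantile {β : ℝ} (hβ : β ≤ 1) (x : Fin n → ℝ) :
    β * n ≤ #{i | x i ≤ empQuantile β x} := by
  have hceil : β * n ≤ ⌈β * n⌉₊ := Nat.le_ceil _
  have hn : β * n ≤ n := by nlinarith [(Nat.cast_nonneg n : (0 : ℝ) ≤ n)]
  calc β * n ≤ ((min ⌈β * n⌉₊ n : ℕ) : ℝ) := by rw [Nat.cast_min]; exact le_min hceil hn
    _ ≤ _ := by exact_mod_cast min_le_card_filter_le_orderStat _ x

end OrderStat

section Exchangeable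

variable {ι : Type*} {μ : Measure (ι → ℝ)} {Q : (ι → ℝ) → ℝ}

lemma measure_coord_le_eq_of_perm_invariant (hμ : ∀ π : Equiv.Perm ι, μ.map (· ∘ π) = μ)
    (hQm : Measurable Q) (hQ : ∀ (π : Equiv.Perm ι) x, Q (x ∘ π) = Q x) (i j : ι) :
    μ {x | x i ≤ Q x} = μ {x | x j ≤ Q x} := by
  classical
  set π := Equiv.swap i j
  have hπm : Measurable fun x : ι → ℝ => x ∘ π := by fun_prop
  have hpre : (· ∘ π) ⁻¹' {x | x i ≤ Q x} = {x | x j ≤ Q x} := by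
    ext x
    simp [π, hQ]
  rw [← hpre, ← Measure.map_apply hπm (measurableSet_le (measurable_pi_apply i) hQm), hμ]

lemma card_mul_measure_coord_le_eq_lintegral [Fintype ι]
    (hμ : ∀ π : Equiv.Perm ι, μ.map (· ∘ π) = μ)
    (hQm : Measurable Q) (hQ : ∀ (π : Equiv.Perm ι) x, Q (x ∘ π) = Q x) (j : ι) :
    Fintype.card ι * μ {x | x j ≤ Q x} = ∫⁻ x, (#{i | x i ≤ Q x} : ℝ≥0∞) ∂μ := by
  have hA : ∀ i, MeasurableSet {x : ι → ℝ | x i ≤ Q x} := fun i =>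
    measurableSet_le (measurable_pi_apply i) hQm
  have hcount : ∀ x : ι → ℝ,
      (#{i | x i ≤ Q x} : ℝ≥0∞) = ∑ i, {y : ι → ℝ | y i ≤ Q y}.indicator 1 x := by
    intro x
    simp [Set.indicator_apply, sum_boole]
  simp_rw [hcount]
  rw [lintegral_finsetSum _ fun i _ => measurable_one.indicator (hA i)]
  simp_rw [lintegral_indicator_one (hA _),
    measure_coord_le_eq_of_perm_invariant hμ hQm hQ _ j, sum_const, card_univ, nsmul_eq_mul]

end Exchangeable

theorem measure_coord_le_empQuantile {n : ℕ} [NeZero n] (μ : Measure (Fin n → ℝ))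
    [IsProbabilityMeasure μ] (hμ : ∀ π : Equiv.Perm (Fin n), μ.map (· ∘ π) = μ)
    {β : ℝ} (hβ : β ≤ 1) (j : Fin n) :
    ENNReal.ofReal β ≤ μ {x | x j ≤ empQuantile β x} := by
  have hcount : ∀ x : Fin n → ℝ, ENNReal.ofReal β * n ≤ #{i | x i ≤ empQuantile β x} := by
    intro x
    rw [← ENNReal.ofReal_natCast n, ← ENNReal.ofReal_mul' (Nat.cast_nonneg n),
      ← ENNReal.ofReal_natCast]
    exact ENNReal.ofReal_le_ofReal (mul_le_card_filter_le_empQuantile hβ x)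
  have key : ENNReal.ofReal β * n ≤ μ {x | x j ≤ empQuantile β x} * n := by
    calc ENNReal.ofReal β * n = ∫⁻ _, ENNReal.ofReal β * n ∂μ := by simp
      _ ≤ ∫⁻ x, (#{i | x i ≤ empQuantile β x} : ℝ≥0∞) ∂μ := lintegral_mono hcount
      _ = μ {x | x j ≤ empQuantile β x} * n := by
        rw [← card_mul_measure_coord_le_eq_lintegral hμ (measurable_empQuantile β)
          (fun π x => orderStat_comp_perm _ x π), Fintype.card_fin, mul_comm]
  exact (ENNReal.mul_le_mul_iff_left (by simp [NeZero.ne n]) (by simp)).mp key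

/-- if `(R 0, …, R n)` (i.e. `R_1,…,R_{n+1}`) is exchangeable, then
`R_{n+1}` is at most the lower `(1-α)`-quantile of the empirical distribution of
all `n+1` values with probability at least `1-α`. -/
theorem exchangeable_empirical_quantile_coverage
    {Ω : Type*} [MeasurableSpace Ω] (P : Measure Ω) [IsProbabilityMeasure P]
    (n : ℕ) (R : Fin (n + 1) → Ω → ℝ) (hmeas : ∀ i, Measurable (R i))
    (hexch : ∀ π : Equiv.Perm (Fin (n + 1)),
      P.map (fun ω => fun i => R (π i) ω) = P.map (fun ω => fun i => R i ω))
    (α : ℝ) (hα : α ∈ Set.Ioo (0 : ℝ) 1) :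
    ENNReal.ofReal (1 - α) ≤
      P {ω | R (Fin.last n) ω ≤ empQuantile (1 - α) (fun i => R i ω)} := by
  set X : Ω → Fin (n + 1) → ℝ := fun ω i => R i ω
  have hX : Measurable X := measurable_pi_lambda _ hmeas
  have : IsProbabilityMeasure (P.map X) := Measure.isProbabilityMeasure_map hX.aemeasurable
  have hperm : ∀ π : Equiv.Perm (Fin (n + 1)), (P.map X).map (· ∘ π) = P.map X := fun π => by
    rw [Measure.map_map (by fun_prop) hX]
    exact hexch π
  have hcov := measure_coord_le_empQuantile (P.map X) hperm (β := 1 - α) (by linarith [hα.1])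
    (Fin.last n)
  rwa [Measure.map_apply hX (measurableSet_le (measurable_pi_apply _)
    (measurable_empQuantile _))] at hcov
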